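/- Let q ≥ 1 be an integer and n = 6q + 5. Then there exists a simple graph G on n vertices with minimum degree δ(G) = 5q + 2 = ⌊5n/6⌋ - 2 together with a 3-edge-colouring of G such that every monochromatic component has order at most 3q + 2 (in particular strictly less than n/2). -/

import Mathlib

open SimpleGraph

/-- The colour-`i` subgraph of the graph `G` under the edge-colouring `c`. -/
def colourSub {V : Type*} {k : ℕ} (G : SimpleGraph V) (c : Sym2 V → Fin k) (i : Fin k) :
    SimpleGraph V where
  Adj u v := G.Adj u v ∧ c s(u, v) = i
  symm := by
    constructor
    intro u v h
    exact ⟨h.1.symm, by rw [Sym2.eq_swap]; exact h.2⟩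
  loopless := by
    constructor
    intro u h
    exact G.ne_of_adj h.1 rfl

/-- `K` is a monochromatic component of colour `i`: a connected component of the colour-`i`
subgraph of `G` that contains at least one edge. Its order is `K.supp.ncard`. -/
def IsMonoComp {V : Type*} {k : ℕ} (G : SimpleGraph V) (c : Sym2 V → Fin k) (i : Fin k)
    (K : (colourSub G c i).ConnectedComponent) : Prop :=
  ∃ u v, (colourSub G c i).Adj u v ∧ (colourSub G c i).connectedComponentMk u = K

/-- The minimum degree of a finite simple graph (classical version). -/
noncomputable def minDeg {V : Type*} [Fintype V] (G : SimpleGraph V) : ℕ :=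
  @SimpleGraph.minDegree V G _ (Classical.decRel _)

namespace Stmt19Aux

/-- Sizes of the nine parts: parts 0,1 have size `q+1`, parts 2–5 have size `q`,
parts 6,7,8 are singletons. -/
def sz (q : ℕ) (j : Fin 9) : ℕ :=
  if j.val < 2 then q + 1 else if j.val < 6 then q else 1

/-- The list of adjacent (unordered, increasing) pairs of parts. -/
def apairs : List (ℕ × ℕ) :=
  [(0,2),(0,3),(0,4),(0,5),(1,2),(1,3),(1,4),(1,5),(2,4),(2,5),(3,4),(3,5),
   (0,6),(1,6),(3,6),(4,6),(5,6),(0,7),(1,7),(2,7),(4,7),(5,7),(0,8),(1,8),(2,8),(4,8),(5,8)]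

/-- Colours of the adjacent pairs of parts. -/
def cpairs : List (ℕ × ℕ × ℕ) :=
  [(0,2,0),(0,4,0),(1,3,0),(2,4,0),(0,3,1),(0,5,1),(1,2,1),(1,4,1),(3,5,1),
   (1,5,2),(2,5,2),(3,4,2),
   (0,6,1),(1,6,0),(3,6,0),(4,6,2),(5,6,1),
   (0,7,0),(1,7,2),(2,7,0),(4,7,0),(5,7,2),
   (0,8,2),(1,8,1),(2,8,1),(4,8,1),(5,8,0)]

/-- Part-level adjacency (with each part adjacent to itself, representing internal cliques). -/
def Amat (i j : Fin 9) : Bool :=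
  i == j || apairs.any (fun pr => pr.1 == min i.val j.val && pr.2 == max i.val j.val)

/-- Part-level colouring (arbitrary on non-adjacent pairs). -/
def Cmat (i j : Fin 9) : Fin 3 :=
  ⟨(((cpairs.find? (fun pr =>
      pr.1 == min i.val j.val && pr.2.1 == max i.val j.val)).map (·.2.2)).getD 0) % 3,
    Nat.mod_lt _ (by norm_num)⟩

/-- Representative of the colour-`t` component of part `j`. -/
def gmap (t : Fin 3) (j : Fin 9) : Fin 9 :=
  ⟨(([[0,1,0,1,0,5,1,0,5],[0,1,1,0,1,0,0,7,1],[0,1,1,3,3,1,3,1,0]].getD t.val []).getD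
      j.val 0) % 9, Nat.mod_lt _ (by norm_num)⟩

lemma Arefl : ∀ i, Amat i i = true := by decide

lemma Asymm : ∀ i j, Amat i j = Amat j i := by decide

lemma Csymm : ∀ i j, Cmat i j = Cmat j i := by decide

lemma gcompat : ∀ (t : Fin 3) (i j : Fin 9), Amat i j = true → Cmat i j = t →
    gmap t i = gmap t j := by decide

/-- The part of a vertex. -/
def pmap (q : ℕ) (x : Fin (6 * q + 5)) : Fin 9 :=
  if x.val < q + 1 then 0 else if x.val < 2 * q + 2 then 1 else if x.val < 3 * q + 2 then 2
  else if x.val < 4 * q + 2 then 3 else if x.val < 5 * q + 2 then 4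
  else if x.val < 6 * q + 2 then 5
  else if x.val < 6 * q + 3 then 6 else if x.val < 6 * q + 4 then 7 else 8

/-- The graph. -/
def Gr (q : ℕ) : SimpleGraph (Fin (6 * q + 5)) where
  Adj u v := u ≠ v ∧ Amat (pmap q u) (pmap q v) = true
  symm := by
    constructor
    intro u v h
    exact ⟨h.1.symm, by rw [Asymm]; exact h.2⟩
  loopless := by constructor; intro u h; exact h.1 rfl

instance (q : ℕ) : DecidableRel (Gr q).Adj := fun _ _ => instDecidableAnd

/-- The colouring. -/
def cfun (q : ℕ) : Sym2 (Fin (6 * q + 5)) → Fin 3 :=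
  Sym2.lift ⟨fun u v => Cmat (pmap q u) (pmap q v), fun u v => Csymm _ _⟩

/-- Lower threshold of part `j`. -/
def lo (q : ℕ) (j : Fin 9) : ℕ :=
  if j.val = 0 then 0 else if j.val = 1 then q + 1 else if j.val = 2 then 2 * q + 2
  else if j.val = 3 then 3 * q + 2 else if j.val = 4 then 4 * q + 2
  else if j.val = 5 then 5 * q + 2
  else if j.val = 6 then 6 * q + 2 else if j.val = 7 then 6 * q + 3 else 6 * q + 4

set_option maxHeartbeats 1600000 in
lemma pmap_eq_iff (q : ℕ) (x : Fin (6 * q + 5)) (j : Fin 9) :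
    pmap q x = j ↔ lo q j ≤ x.val ∧ x.val < lo q j + sz q j := by
  have hx := x.isLt
  obtain ⟨jv, hjv⟩ := j
  interval_cases jv <;>
    (norm_num [lo, sz]; simp only [pmap]; split_ifs <;>
      first
        | exact iff_of_true rfl (by omega)
        | exact iff_of_false (by simp only [Fin.ext_iff]; decide) (by omega))

lemma card_interval (q a b : ℕ) (hb : b ≤ 6 * q + 5) :
    ((Finset.univ : Finset (Fin (6 * q + 5))).filter
      (fun x => a ≤ x.val ∧ x.val < b)).card = b - a := by
  rw [← Nat.card_Ico a b]
  apply Finset.card_bij (fun (x : Fin (6 * q + 5)) _ => x.val)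
  · intro x hx
    simp only [Finset.mem_filter] at hx
    simp [Finset.mem_Ico, hx.2.1, hx.2.2]
  · intro x hx y hy h
    exact Fin.ext h
  · intro m hm
    simp only [Finset.mem_Ico] at hm
    exact ⟨⟨m, lt_of_lt_of_le hm.2 hb⟩, by simp [hm.1, hm.2], rfl⟩

lemma card_fiber (q : ℕ) (j : Fin 9) :
    ((Finset.univ : Finset (Fin (6 * q + 5))).filter (fun x => pmap q x = j)).card = sz q j := by
  have h1 : ((Finset.univ : Finset (Fin (6 * q + 5))).filter (fun x => pmap q x = j)) =
      ((Finset.univ : Finset (Fin (6 * q + 5))).filter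
        (fun x => lo q j ≤ x.val ∧ x.val < lo q j + sz q j)) := by
    apply Finset.filter_congr
    intro x _
    simp [pmap_eq_iff]
  rw [h1, card_interval]
  · omega
  · fin_cases j <;> simp [lo, sz] <;> omega

lemma card_p_filter (q : ℕ) (P : Fin 9 → Prop) [DecidablePred P] :
    ((Finset.univ : Finset (Fin (6 * q + 5))).filter (fun x => P (pmap q x))).card =
      ∑ j ∈ Finset.univ.filter P, sz q j := by
  rw [Finset.card_eq_sum_card_fiberwise
    (f := pmap q) (t := Finset.univ.filter P) (by intro x hx; simpa using (Finset.mem_filter.1 hx).2)]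
  apply Finset.sum_congr rfl
  intro j hj
  have hPj : P j := (Finset.mem_filter.1 hj).2
  rw [← card_fiber q j]
  congr 1
  ext x
  simp only [Finset.mem_filter, Finset.mem_univ, true_and]
  constructor
  · rintro ⟨_, h⟩; exact h
  · intro h; exact ⟨h ▸ hPj, h⟩

lemma sum_sz (q : ℕ) (S : Finset (Fin 9)) :
    ∑ j ∈ S, sz q j =
      q * (S.filter (fun j => j.val < 6)).card +
        (S.filter (fun j => j.val < 2 ∨ 6 ≤ j.val)).card := by
  rw [Finset.card_filter, Finset.card_filter, Finset.mul_sum, ← Finset.sum_add_distrib]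
  apply Finset.sum_congr rfl
  intro j _
  simp only [sz]
  split_ifs <;> omega

lemma sum_bound (q : ℕ) (hq : 1 ≤ q) (S : Finset (Fin 9))
    (ha : (S.filter (fun j => j.val < 6)).card ≤ 3)
    (hb : (S.filter (fun j => j.val < 6)).card +
      (S.filter (fun j => j.val < 2 ∨ 6 ≤ j.val)).card ≤ 5) :
    ∑ j ∈ S, sz q j ≤ 3 * q + 2 := by
  rw [sum_sz]
  set a := (S.filter (fun j => j.val < 6)).card with ha'
  interval_cases a <;> omega

lemma adj_filter_eq (q : ℕ) (v : Fin (6 * q + 5)) :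
    (Finset.univ.filter fun u => (Gr q).Adj v u) =
      (Finset.univ.filter fun u => Amat (pmap q v) (pmap q u) = true).erase v := by
  ext u
  simp only [Finset.mem_filter, Finset.mem_erase, Finset.mem_univ, true_and]
  constructor
  · rintro ⟨h1, h2⟩; exact ⟨fun h => h1 (h ▸ rfl), h2⟩
  · rintro ⟨h1, h2⟩; exact ⟨fun h => h1 (h ▸ rfl), h2⟩

lemma degree_eq (q : ℕ) (v : Fin (6 * q + 5)) (F : Fintype ((Gr q).neighborSet v)) :
    @SimpleGraph.degree _ (Gr q) v F =
      (∑ j ∈ Finset.univ.filter (fun j => Amat (pmap q v) j = true), sz q j) - 1 := by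
  show ((Gr q).neighborFinset v).card = _
  have h0 : (Gr q).neighborFinset v = Finset.univ.filter (fun u => (Gr q).Adj v u) := by
    ext u
    simp [SimpleGraph.mem_neighborFinset]
  rw [h0, adj_filter_eq, Finset.card_erase_of_mem (by simp [Arefl]),
    card_p_filter q (fun j => Amat (pmap q v) j = true)]

lemma amat_cards : ∀ i : Fin 9,
    ((Finset.univ.filter (fun j => Amat i j = true)).filter (fun j => j.val < 6)).card = 5 ∧
      3 ≤ ((Finset.univ.filter (fun j => Amat i j = true)).filter
        (fun j => j.val < 2 ∨ 6 ≤ j.val)).card := by decide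

lemma amat_card8 :
    ((Finset.univ.filter (fun j => Amat 8 j = true)).filter
      (fun j => j.val < 2 ∨ 6 ≤ j.val)).card = 3 := by decide

lemma degree_ge (q : ℕ) (v : Fin (6 * q + 5)) (F : Fintype ((Gr q).neighborSet v)) :
    5 * q + 2 ≤ @SimpleGraph.degree _ (Gr q) v F := by
  rw [degree_eq q v F, sum_sz]
  obtain ⟨h1, h2⟩ := amat_cards (pmap q v)
  rw [h1]
  omega

lemma pmap_last (q : ℕ) : pmap q ⟨6 * q + 4, by omega⟩ = 8 := by
  rw [pmap_eq_iff]
  norm_num [lo, sz, show ((8 : Fin 9)).val = 8 from rfl]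

lemma degree_last (q : ℕ) (F : Fintype ((Gr q).neighborSet ⟨6 * q + 4, by omega⟩)) :
    @SimpleGraph.degree _ (Gr q) ⟨6 * q + 4, by omega⟩ F = 5 * q + 2 := by
  rw [degree_eq, pmap_last, sum_sz]
  obtain ⟨h1, _⟩ := amat_cards 8
  rw [h1, amat_card8]
  omega

lemma gmap_cards : ∀ (t : Fin 3) (r : Fin 9),
    ((Finset.univ.filter (fun j => gmap t j = r)).filter (fun j => j.val < 6)).card ≤ 3 ∧
      ((Finset.univ.filter (fun j => gmap t j = r)).filter (fun j => j.val < 6)).card +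
        ((Finset.univ.filter (fun j => gmap t j = r)).filter
          (fun j => j.val < 2 ∨ 6 ≤ j.val)).card ≤ 5 := by decide

lemma reach_g (q : ℕ) (i : Fin 3) {a b : Fin (6 * q + 5)}
    (h : (colourSub (Gr q) (cfun q) i).Reachable a b) :
    gmap i (pmap q a) = gmap i (pmap q b) := by
  rw [SimpleGraph.reachable_iff_reflTransGen] at h
  induction h with
  | refl => rfl
  | tail _ hadj ih =>
      exact ih.trans (gcompat i _ _ hadj.1.2 (by simpa [cfun] using hadj.2))

end Stmt19Aux

set_option maxHeartbeats 2000000 in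
open Stmt19Aux in
/-- For q ≥ 1 and n = 6q + 5, there is a graph G on n vertices with
δ(G) = 5q + 2 = ⌊5n/6⌋ - 2 and a 3-edge-colouring in which every monochromatic component has
order at most 3q + 2. -/
theorem stmt_19 (q : ℕ) (hq : 1 ≤ q) :
    ∃ (G : SimpleGraph (Fin (6 * q + 5))) (c : Sym2 (Fin (6 * q + 5)) → Fin 3),
      minDeg G = 5 * q + 2 ∧ minDeg G = 5 * (6 * q + 5) / 6 - 2 ∧
      ∀ (i : Fin 3) (K : (colourSub G c i).ConnectedComponent),
        IsMonoComp G c i K → K.supp.ncard ≤ 3 * q + 2 := by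
  haveI hne : Nonempty (Fin (6 * q + 5)) := ⟨⟨0, by omega⟩⟩
  have hmin : minDeg (Gr q) = 5 * q + 2 := by
    unfold minDeg
    apply le_antisymm
    · exact le_trans (@SimpleGraph.minDegree_le_degree _ (Gr q) _ (Classical.decRel _)
        ⟨6 * q + 4, by omega⟩) (le_of_eq (degree_last q _))
    · exact @SimpleGraph.le_minDegree_of_forall_le_degree _ (Gr q) _ (Classical.decRel _) _ _
        (fun v => degree_ge q v _)
  refine ⟨Gr q, cfun q, hmin, by rw [hmin]; omega, ?_⟩
  intro i K hmc
  obtain ⟨u, v, huv, hK⟩ := hmc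
  have hsub : K.supp ⊆ {w | gmap i (pmap q w) = gmap i (pmap q u)} := by
    intro w hw
    rw [SimpleGraph.ConnectedComponent.mem_supp_iff] at hw
    have hr : (colourSub (Gr q) (cfun q) i).Reachable u w :=
      (SimpleGraph.ConnectedComponent.exact (hw.trans hK.symm)).symm
    exact (reach_g q i hr).symm
  calc K.supp.ncard
      ≤ {w | gmap i (pmap q w) = gmap i (pmap q u)}.ncard :=
        Set.ncard_le_ncard hsub (Set.toFinite _)
    _ = (Finset.univ.filter (fun w => gmap i (pmap q w) = gmap i (pmap q u))).card := by
        rw [Set.ncard_eq_toFinset_card']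
        congr 1
        ext w
        simp
    _ = ∑ j ∈ Finset.univ.filter (fun j => gmap i j = gmap i (pmap q u)), sz q j :=
        by exact card_p_filter q (fun j => gmap i j = gmap i (pmap q u))
    _ ≤ 3 * q + 2 :=
        sum_bound q hq _ (gmap_cards i _).1 (gmap_cards i _).2
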